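/- QP solution, both constraints active (Lemma 2, case Ω_{cbf,2}^{clf}): Suppose F_V·‖b₁‖² ≥ F_λ·⟨b₂, b₁⟩, F_V·⟨b₁, b₂⟩ ≥ F_λ·(1/p + ‖b₂‖²), and b₁ ≠ 0. Set D := (1/p + ‖b₂‖²)·‖b₁‖² − ⟨b₁, b₂⟩² (which is positive), v₁ := (F_V·‖b₁‖² − F_λ·⟨b₂, b₁⟩)/D and v₂ := (F_V·⟨b₂, b₁⟩ − F_λ·(1/p + ‖b₂‖²))/D. Then the unique global minimizer of the QP is u* = −v₁·b₂ + v₂·b₁ together with δ* = F_V + ⟨b₂, u*⟩, and moreover the CBF constraint is active at the minimizer: F_λ + ⟨b₁, u*⟩ = 0. -/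

import Mathlib

open RealInnerProductSpace

/-- Feasible set of the QP: the CBF constraint `Fλ + ⟨b₁,u⟩ ≥ 0` and the
CLF constraint `F_V + ⟨b₂,u⟩ ≤ δ`. -/
def QPFeasible {m : ℕ} (Fl FV : ℝ) (b₁ b₂ : EuclideanSpace ℝ (Fin m))
    (z : EuclideanSpace ℝ (Fin m) × ℝ) : Prop :=
  0 ≤ Fl + ⟪b₁, z.1⟫ ∧ FV + ⟪b₂, z.1⟫ ≤ z.2

/-- Objective of the QP: `‖u‖² + p δ²`. -/
noncomputable def QPObj {m : ℕ} (p : ℝ) (z : EuclideanSpace ℝ (Fin m) × ℝ) : ℝ :=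
  ‖z.1‖ ^ 2 + p * z.2 ^ 2

/-- `z` is the unique global minimizer of the QP. -/
def QPUniqueMin {m : ℕ} (p Fl FV : ℝ) (b₁ b₂ : EuclideanSpace ℝ (Fin m))
    (z : EuclideanSpace ℝ (Fin m) × ℝ) : Prop :=
  (QPFeasible Fl FV b₁ b₂ z ∧
      ∀ w, QPFeasible Fl FV b₁ b₂ w → QPObj p z ≤ QPObj p w) ∧
    ∀ w, (QPFeasible Fl FV b₁ b₂ w ∧
      ∀ v, QPFeasible Fl FV b₁ b₂ v → QPObj p w ≤ QPObj p v) → w = z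

/-!
The candidate `(u*, δ*)` is a KKT point of the QP: `v₁, v₂` are the Cramer's-rule solution of
the two activity equations, the hypotheses say exactly that they are nonnegative, and
stationarity reads `u* = v₂ b₁ - v₁ b₂`, `p δ* = v₁`. Expanding the strictly convex objective
around a KKT point gives
`J(w) = J(z*) + ‖u - u*‖² + p (δ - δ*)² + 2 (multipliers) · (constraint slacks)`,
so every other feasible point is strictly worse.
-/

lemma gram_det_add_pos {E : Type*} [NormedAddCommGroup E] [InnerProductSpace ℝ E]
    {c : ℝ} (hc : 0 < c) {x : E} (hx : x ≠ 0) (y : E) :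
    0 < (c + ‖y‖ ^ 2) * ‖x‖ ^ 2 - ⟪x, y⟫ ^ 2 := by
  have hcs : ⟪x, y⟫ ^ 2 ≤ ‖x‖ ^ 2 * ‖y‖ ^ 2 := by
    simpa only [sq, real_inner_self_eq_norm_sq] using real_inner_mul_inner_self_le x y
  have hx2 : 0 < c * ‖x‖ ^ 2 := by positivity
  linarith

lemma cramer_rule_two_by_two {a c B D Fl FV v₁ v₂ : ℝ} (hD : D = c * a - B ^ 2) (hD0 : D ≠ 0)
    (hv₁ : v₁ = (FV * a - Fl * B) / D) (hv₂ : v₂ = (FV * B - Fl * c) / D) :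
    v₂ * a - v₁ * B = -Fl ∧ v₂ * B - v₁ * c = -FV := by
  subst hv₁ hv₂
  constructor <;> field_simp <;> rw [hD] <;> ring

section QP

variable {m : ℕ} {p Fl FV : ℝ} {b₁ b₂ : EuclideanSpace ℝ (Fin m)}

lemma qpUniqueMin_of_quadratic_growth (hp : 0 < p) {z : EuclideanSpace ℝ (Fin m) × ℝ}
    (hz : QPFeasible Fl FV b₁ b₂ z)
    (hgrowth : ∀ w, QPFeasible Fl FV b₁ b₂ w →
      QPObj p z + (‖w.1 - z.1‖ ^ 2 + p * (w.2 - z.2) ^ 2) ≤ QPObj p w) :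
    QPUniqueMin p Fl FV b₁ b₂ z := by
  refine ⟨⟨hz, fun w hw => ?_⟩, fun w ⟨hw, hwmin⟩ => ?_⟩
  · have hgap : 0 ≤ ‖w.1 - z.1‖ ^ 2 + p * (w.2 - z.2) ^ 2 := by positivity
    linarith [hgrowth w hw]
  · have hle : ‖w.1 - z.1‖ ^ 2 + p * (w.2 - z.2) ^ 2 ≤ 0 := by
      linarith [hgrowth w hw, hwmin z hz]
    obtain ⟨h₁, h₂⟩ := (add_eq_zero_iff_of_nonneg (by positivity) (by positivity)).1
      (le_antisymm hle (by positivity))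
    simp only [ne_eq, OfNat.ofNat_ne_zero, not_false_eq_true, pow_eq_zero_iff, norm_eq_zero,
      sub_eq_zero, mul_eq_zero, hp.ne', false_or] at h₁ h₂
    exact Prod.ext h₁ h₂

/-- KKT sufficiency for the QP, with multipliers `2 μ₁` (CBF) and `2 μ₂` (CLF). -/
lemma qpUniqueMin_of_kkt (hp : 0 < p) {μ₁ μ₂ : ℝ} (hμ₁ : 0 ≤ μ₁) (hμ₂ : 0 ≤ μ₂)
    {z : EuclideanSpace ℝ (Fin m) × ℝ} (hz : QPFeasible Fl FV b₁ b₂ z)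
    (hu : z.1 = μ₁ • b₁ - μ₂ • b₂) (hδ : p * z.2 = μ₂)
    (hslack₁ : μ₁ * (Fl + ⟪b₁, z.1⟫) = 0) (hslack₂ : μ₂ * (z.2 - (FV + ⟪b₂, z.1⟫)) = 0) :
    QPUniqueMin p Fl FV b₁ b₂ z := by
  refine qpUniqueMin_of_quadratic_growth hp hz fun ⟨u, δ⟩ ⟨hcbf, hclf⟩ => ?_
  obtain ⟨u', δ'⟩ := z
  dsimp only at hu hδ hslack₁ hslack₂ hcbf hclf ⊢
  have hexpand : ‖u‖ ^ 2 = ‖u'‖ ^ 2 + 2 * ⟪u', u - u'⟫ + ‖u - u'‖ ^ 2 := by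
    rw [← norm_add_sq_real, add_sub_cancel]
  have hstat : ⟪u', u - u'⟫ = μ₁ * (⟪b₁, u⟫ - ⟪b₁, u'⟫) - μ₂ * (⟪b₂, u⟫ - ⟪b₂, u'⟫) := by
    nth_rw 1 [hu]
    rw [inner_sub_left, real_inner_smul_left, real_inner_smul_left, inner_sub_right,
      inner_sub_right]
  have hgap : QPObj p (u, δ) - (QPObj p (u', δ') + (‖u - u'‖ ^ 2 + p * (δ - δ') ^ 2))
      = 2 * μ₁ * (Fl + ⟪b₁, u⟫) + 2 * μ₂ * (δ - (FV + ⟪b₂, u⟫)) := by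
    simp only [QPObj]
    rw [hexpand, hstat]
    linear_combination (-2) * hslack₁ + (-2) * hslack₂ + (2 * δ - 2 * δ') * hδ
  linarith [mul_nonneg hμ₁ hcbf, mul_nonneg hμ₂ (sub_nonneg.2 hclf)]

end QP

/-- QP solution when both constraints are active (case `Ω_{cbf,2}^{clf}`). -/
theorem qp_solution_both_active {m : ℕ} (p : ℝ) (hp : 0 < p)
    (Fl FV : ℝ) (b₁ b₂ : EuclideanSpace ℝ (Fin m))
    (h1 : Fl * ⟪b₂, b₁⟫ ≤ FV * ‖b₁‖ ^ 2)
    (h2 : Fl * (1 / p + ‖b₂‖ ^ 2) ≤ FV * ⟪b₁, b₂⟫)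
    (hb₁ : b₁ ≠ 0)
    (D : ℝ) (hD : D = (1 / p + ‖b₂‖ ^ 2) * ‖b₁‖ ^ 2 - ⟪b₁, b₂⟫ ^ 2)
    (v₁ : ℝ) (hv₁ : v₁ = (FV * ‖b₁‖ ^ 2 - Fl * ⟪b₂, b₁⟫) / D)
    (v₂ : ℝ) (hv₂ : v₂ = (FV * ⟪b₂, b₁⟫ - Fl * (1 / p + ‖b₂‖ ^ 2)) / D) :
    0 < D ∧
      QPUniqueMin p Fl FV b₁ b₂
        (-v₁ • b₂ + v₂ • b₁, FV + ⟪b₂, -v₁ • b₂ + v₂ • b₁⟫) ∧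
      Fl + ⟪b₁, -v₁ • b₂ + v₂ • b₁⟫ = 0 := by
  rw [real_inner_comm b₁ b₂] at h1 hv₁ hv₂
  have hD0 : 0 < D := hD ▸ gram_det_add_pos (by positivity) hb₁ b₂
  have hv₁0 : 0 ≤ v₁ := hv₁ ▸ div_nonneg (sub_nonneg.2 h1) hD0.le
  have hv₂0 : 0 ≤ v₂ := hv₂ ▸ div_nonneg (sub_nonneg.2 h2) hD0.le
  obtain ⟨hcbf, hclf⟩ := cramer_rule_two_by_two hD hD0.ne' hv₁ hv₂
  have hu : -v₁ • b₂ + v₂ • b₁ = v₂ • b₁ - v₁ • b₂ := by module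
  have hcbf_active : Fl + ⟪b₁, -v₁ • b₂ + v₂ • b₁⟫ = 0 := by
    rw [hu, inner_sub_right, real_inner_smul_right, real_inner_smul_right,
      real_inner_self_eq_norm_sq]
    linarith
  have hδ : p * (FV + ⟪b₂, -v₁ • b₂ + v₂ • b₁⟫) = v₁ := by
    rw [hu, inner_sub_right, real_inner_smul_right, real_inner_smul_right,
      real_inner_self_eq_norm_sq, real_inner_comm b₁ b₂]
    linear_combination p * hclf + v₁ * mul_inv_cancel₀ hp.ne'
  refine ⟨hD0, qpUniqueMin_of_kkt hp hv₂0 hv₁0 ⟨hcbf_active.ge, le_rfl⟩ hu hδ ?_ ?_,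
    hcbf_active⟩
  · rw [hcbf_active, mul_zero]
  · rw [sub_self, mul_zero]
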